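/- arXiv:2602.11657 — 6 statements merged into one kernel-verified Lean document; each statement's English description precedes it below -/
import Mathlib

section
/- Let X be a metric space, let v ∈ X, and suppose a punctured neighborhood of v has at least Δ connected components accumulating at v (i.e., removing v locally disconnects X into Δ pieces). If X is covered by n geodesics, then n ≥ ⌈Δ/2⌉. -/
open Set

/-- A geodesic parameterized on `[0, L]`: an isometric embedding of an interval. -/
def IsGeodesic {X : Type*} [MetricSpace X] (γ : ℝ → X) (L : ℝ) : Prop :=
  0 ≤ L ∧ ∀ s ∈ Icc (0 : ℝ) L, ∀ t ∈ Icc (0 : ℝ) L, dist (γ s) (γ t) = |s - t|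

/-- If removing `v` locally disconnects `X` into at least `Δ` pieces accumulating at `v`,
and `X` is covered by `n` geodesics, then `n ≥ ⌈Δ/2⌉`. -/
theorem cover_card_ge_ceil_half_local_degree
    {X : Type*} [MetricSpace X] (v : X) (Δ n : ℕ)
    (hloc : ∃ U ∈ nhds v, ∃ C : Fin Δ → Set X,
      (∀ i, ∃ x ∈ U \ {v}, C i = connectedComponentIn (U \ {v}) x) ∧
      Function.Injective C ∧ (∀ i, v ∈ closure (C i)))
    (γ : Fin n → ℝ → X) (L : Fin n → ℝ)
    (hg : ∀ i, IsGeodesic (γ i) (L i))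
    (hcov : (⋃ i, γ i '' Icc 0 (L i)) = univ) :
    (Δ + 1) / 2 ≤ n := by
  obtain ⟨U, hU, C, hCx, hCinj, hCcl⟩ := hloc
  obtain ⟨ε, hε, hball⟩ := Metric.mem_nhds_iff.1 hU
  -- each component is inside U \ {v}
  have hCS : ∀ i, C i ⊆ U \ {v} := by
    intro i
    obtain ⟨w, hw, hEq⟩ := hCx i
    rw [hEq]; exact connectedComponentIn_subset _ _
  -- pick a point of each component within ε/4 of v
  have hx : ∀ i : Fin Δ, ∃ x, x ∈ C i ∧ dist x v < ε / 4 := by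
    intro i
    have h := Metric.mem_closure_iff.1 (hCcl i) (ε / 4) (by positivity)
    obtain ⟨x, hxC, hxd⟩ := h
    exact ⟨x, hxC, by rw [dist_comm]; exact hxd⟩
  choose x hxC hxd using hx
  -- the component of x i is C i
  have hcomp : ∀ i, connectedComponentIn (U \ {v}) (x i) = C i := by
    intro i
    obtain ⟨w, hw, hEq⟩ := hCx i
    rw [hEq]
    exact (connectedComponentIn_eq (by rw [← hEq]; exact hxC i)).symm
  -- each x i lies on some geodesic
  have hcov' : ∀ i : Fin Δ, ∃ j : Fin n, ∃ s ∈ Icc (0 : ℝ) (L j), γ j s = x i := by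
    intro i
    have h : x i ∈ ⋃ j, γ j '' Icc 0 (L j) := hcov ▸ mem_univ _
    rw [mem_iUnion] at h
    obtain ⟨j, hj⟩ := h
    obtain ⟨s, hs, hsx⟩ := hj
    exact ⟨j, s, hs, hsx⟩
  choose f t ht hγt using hcov'
  -- geodesics are continuous on their domain
  have hcont : ∀ j : Fin n, ContinuousOn (γ j) (Icc 0 (L j)) := by
    intro j
    refine (LipschitzOnWith.of_dist_le_mul (K := 1) ?_).continuousOn
    intro a ha b hb
    rw [(hg j).2 a ha b hb, NNReal.coe_one, one_mul, Real.dist_eq]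
  -- arc lemma: a sub-arc near v avoiding v stays in one component
  have arc : ∀ j : Fin n, ∀ s ∈ Icc (0 : ℝ) (L j), ∀ u ∈ Icc (0 : ℝ) (L j), s ≤ u →
      dist (γ j s) v < ε / 4 → dist (γ j u) v < ε / 4 →
      (∀ r ∈ Icc s u, γ j r ≠ v) →
      γ j u ∈ connectedComponentIn (U \ {v}) (γ j s) := by
    intro j s hs u hu hsu hds hdu hne
    have hIcc : Icc s u ⊆ Icc 0 (L j) := Icc_subset_Icc hs.1 hu.2
    have hconn : IsPreconnected (γ j '' Icc s u) :=
      isPreconnected_Icc.image _ ((hcont j).mono hIcc)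
    have hsub : γ j '' Icc s u ⊆ U \ {v} := by
      rintro _ ⟨r, hr, rfl⟩
      refine ⟨hball ?_, hne r hr⟩
      have h1 : dist (γ j r) (γ j s) = |r - s| := (hg j).2 r (hIcc hr) s hs
      have h2 : dist (γ j s) (γ j u) = |s - u| := (hg j).2 s hs u hu
      have habs1 : |r - s| = r - s := abs_of_nonneg (by linarith [hr.1])
      have habs2 : |s - u| = u - s := by rw [abs_sub_comm]; exact abs_of_nonneg (by linarith)
      have htr1 : dist (γ j r) v ≤ dist (γ j r) (γ j s) + dist (γ j s) v := dist_triangle _ _ _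
      have htr2 : dist (γ j s) (γ j u) ≤ dist (γ j s) v + dist (γ j u) v := by
        calc dist (γ j s) (γ j u) ≤ dist (γ j s) v + dist v (γ j u) := dist_triangle _ _ _
        _ = dist (γ j s) v + dist (γ j u) v := by rw [dist_comm v]
      rw [Metric.mem_ball]
      have : r - s ≤ u - s := by linarith [hr.2]
      linarith
    exact hconn.subset_connectedComponentIn ⟨s, ⟨le_refl s, hsu⟩, rfl⟩ hsub
      ⟨u, ⟨hsu, le_refl u⟩, rfl⟩
  -- key: three indices with the same geodesic and sorted parameters give a contradiction
  have key : ∀ p q r : Fin Δ, f p = f q → f q = f r → p ≠ q → q ≠ r →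
      t p ≤ t q → t q ≤ t r → False := by
    intro p q r hpq hqr hne1 hne2 h1 h2
    have hpr : f p = f r := hpq.trans hqr
    have e1 : γ (f p) (t p) = x p := hγt p
    have e2 : γ (f p) (t q) = x q := by rw [hpq]; exact hγt q
    have e3 : γ (f p) (t r) = x r := by rw [hpr]; exact hγt r
    have htp : t p ∈ Icc (0 : ℝ) (L (f p)) := ht p
    have htq : t q ∈ Icc (0 : ℝ) (L (f p)) := by rw [hpq]; exact ht q
    have htr : t r ∈ Icc (0 : ℝ) (L (f p)) := by rw [hpr]; exact ht r
    have comp_ne : ∀ a b : Fin Δ, a ≠ b → γ (f p) (t a) = x a → γ (f p) (t b) = x b →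
        γ (f p) (t b) ∉ connectedComponentIn (U \ {v}) (γ (f p) (t a)) := by
      intro a b hab ea eb hmem
      rw [ea, eb, hcomp a] at hmem
      have hCeq : C a = C b := by
        rw [← hcomp a, ← hcomp b]
        exact connectedComponentIn_eq (by rw [hcomp a]; exact hmem)
      exact hab (hCinj hCeq)
    have hu1 : ∃ u ∈ Icc (t p) (t q), γ (f p) u = v := by
      by_contra h
      push_neg at h
      exact comp_ne p q hne1 e1 e2
        (arc (f p) (t p) htp (t q) htq h1 (by rw [e1]; exact hxd p) (by rw [e2]; exact hxd q) h)
    have hu2 : ∃ u ∈ Icc (t q) (t r), γ (f p) u = v := by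
      by_contra h
      push_neg at h
      exact comp_ne q r hne2 e2 e3
        (arc (f p) (t q) htq (t r) htr h2 (by rw [e2]; exact hxd q) (by rw [e3]; exact hxd r) h)
    obtain ⟨u1, hu1I, hu1v⟩ := hu1
    obtain ⟨u2, hu2I, hu2v⟩ := hu2
    have hu1L : u1 ∈ Icc (0 : ℝ) (L (f p)) := ⟨le_trans htp.1 hu1I.1, le_trans hu1I.2 htq.2⟩
    have hu2L : u2 ∈ Icc (0 : ℝ) (L (f p)) := ⟨le_trans htq.1 hu2I.1, le_trans hu2I.2 htr.2⟩
    have habs : |u1 - u2| = 0 := by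
      rw [← (hg (f p)).2 u1 hu1L u2 hu2L, hu1v, hu2v, dist_self]
    have hu12 : u1 = u2 := by
      have := abs_eq_zero.1 habs; linarith
    have huq : u1 = t q := le_antisymm hu1I.2 (hu12 ▸ hu2I.1)
    have hxqv : x q = v := by rw [← e2, ← huq, hu1v]
    exact (hCS q (hxC q)).2 (by simp [hxqv])
  -- each geodesic serves at most 2 components
  have fiber : ∀ j : Fin n, (Finset.univ.filter (fun i => f i = j)).card ≤ 2 := by
    intro j
    by_contra h
    push_neg at h
    obtain ⟨a, ha, b, hb, c, hc, hab, hac, hbc⟩ := Finset.two_lt_card.1 h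
    simp only [Finset.mem_filter, Finset.mem_univ, true_and] at ha hb hc
    have fab : f a = f b := ha.trans hb.symm
    have fbc : f b = f c := hb.trans hc.symm
    have fac : f a = f c := ha.trans hc.symm
    rcases le_total (t a) (t b) with h1 | h1 <;> rcases le_total (t b) (t c) with h2 | h2 <;>
      rcases le_total (t a) (t c) with h3 | h3
    · exact key a b c fab fbc hab hbc h1 h2
    · exact key a b c fab fbc hab hbc h1 h2
    · exact key a c b fac fbc.symm hac hbc.symm h3 h2
    · exact key c a b fac.symm fab (Ne.symm hac) hab h3 h1
    · exact key b a c fab.symm fac (Ne.symm hab) hac h1 h3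
    · exact key b c a fbc fac.symm hbc (Ne.symm hac) h2 h3
    · exact key c b a fbc.symm fab.symm (Ne.symm hbc) (Ne.symm hab) h2 h1
    · exact key c b a fbc.symm fab.symm (Ne.symm hbc) (Ne.symm hab) h2 h1
  have hΔ : Δ ≤ 2 * n := by
    calc Δ = (Finset.univ : Finset (Fin Δ)).card := by simp
    _ ≤ 2 * (Finset.univ : Finset (Fin n)).card :=
        Finset.card_le_mul_card_image_of_maps_to (fun a _ => Finset.mem_univ (f a)) 2
          (fun b _ => fiber b)
    _ = 2 * n := by simp
  omega
end

section
/- The image of a geodesic γ : [0, L] → X in a metric space X contains at most two points that are degree-1 points of X, namely γ(0) and γ(L). -/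
/-!
A degree-one point `x` is, via its chart onto `[0, 1)`, the minimum of a continuous real
function that is injective on a neighbourhood of `x`. If `x = γ t` with `0 < t < L`, composing
with the geodesic gives a continuous injective real function near `t` with a local minimum at
`t`; but continuous injective functions of one real variable are strictly monotone.
-/

open Set

/-- `x` is a degree-1 point: it has an open neighborhood homeomorphic to `[0,1)`
with `x` corresponding to `0`. -/
def IsDegreeOnePoint {X : Type*} [TopologicalSpace X] (x : X) : Prop :=
  ∃ U : Set X, IsOpen U ∧ ∃ hx : x ∈ U, ∃ e : U ≃ₜ Ico (0 : ℝ) 1,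
    e ⟨x, hx⟩ = ⟨0, Set.left_mem_Ico.mpr one_pos⟩

open Filter Topology

theorem ContinuousOn.not_isLocalMin_of_injOn {α δ : Type*} [ConditionallyCompleteLinearOrder α]
    [TopologicalSpace α] [OrderTopology α] [DenselyOrdered α] [NoMinOrder α] [NoMaxOrder α]
    [LinearOrder δ] [TopologicalSpace δ] [OrderClosedTopology δ] {f : α → δ} {s : Set α} {t : α}
    (hc : ContinuousOn f s) (hi : InjOn f s) (hs : s ∈ 𝓝 t) : ¬ IsLocalMin f t := by
  intro hmin
  obtain ⟨l, u, ht, hsub⟩ := mem_nhds_iff_exists_Ioo_subset.mp (inter_mem hs hmin)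
  rcases (hc.mono fun y hy ↦ (hsub hy).1).strictMonoOn_of_injOn_Ioo (ht.1.trans ht.2)
      (hi.mono fun y hy ↦ (hsub hy).1) with hmono | hanti
  · obtain ⟨r, hlr, hrt⟩ := exists_between ht.1
    have hr : r ∈ Ioo l u := ⟨hlr, hrt.trans ht.2⟩
    exact (hmono hr ht hrt).not_ge (hsub hr).2
  · obtain ⟨r, htr, hru⟩ := exists_between ht.2
    have hr : r ∈ Ioo l u := ⟨ht.1.trans htr, hru⟩
    exact (hanti ht hr htr).not_ge (hsub hr).2

theorem IsGeodesic.isometry_domRestrict {X : Type*} [MetricSpace X] {γ : ℝ → X} {L : ℝ}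
    (hγ : IsGeodesic γ L) : Isometry ((Icc 0 L).domRestrict γ) :=
  Isometry.of_dist_eq fun s t ↦ hγ.2 s s.2 t t.2

theorem IsDegreeOnePoint.exists_continuousOn_injOn_isMinOn {X : Type*} [TopologicalSpace X]
    {x : X} (hx : IsDegreeOnePoint x) :
    ∃ U ∈ 𝓝 x, ∃ g : X → ℝ, ContinuousOn g U ∧ InjOn g U ∧ IsMinOn g U x := by
  classical
  obtain ⟨U, hU, hxU, e, he⟩ := hx
  set g : X → ℝ := fun y ↦ if hy : y ∈ U then e ⟨y, hy⟩ else 0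
  have hg : U.domRestrict g = fun y ↦ (e y : ℝ) := funext fun y ↦ dif_pos y.2
  refine ⟨U, hU.mem_nhds hxU, g, ?_, ?_, ?_⟩
  · rw [continuousOn_iff_continuous_domRestrict, hg]
    fun_prop
  · rw [injOn_iff_injective, hg]
    exact Subtype.val_injective.comp e.injective
  · intro y hy
    simp only [mem_ofPred_eq, g, dif_pos hy, dif_pos hxU, he]
    exact (e ⟨y, hy⟩).2.1

theorem IsDegreeOnePoint.ne_of_continuousOn_injOn {α X : Type*}
    [ConditionallyCompleteLinearOrder α] [TopologicalSpace α] [OrderTopology α]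
    [DenselyOrdered α] [NoMinOrder α] [NoMaxOrder α] [TopologicalSpace X] {x : X}
    (hx : IsDegreeOnePoint x) {γ : α → X} {s : Set α} {t : α}
    (hc : ContinuousOn γ s) (hi : InjOn γ s) (hs : s ∈ 𝓝 t) : γ t ≠ x := by
  rintro rfl
  obtain ⟨U, hU, g, hgc, hgi, hmin⟩ := hx.exists_continuousOn_injOn_isMinOn
  have hγt : ContinuousAt γ t := hc.continuousAt hs
  have hs' : s ∩ γ ⁻¹' U ∈ 𝓝 t := inter_mem hs (hγt.preimage_mem_nhds hU)
  exact (hgc.comp (hc.mono inter_subset_left) fun y hy ↦ hy.2).not_isLocalMin_of_injOn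
    (hgi.comp (hi.mono inter_subset_left) fun y hy ↦ hy.2) hs'
    ((hmin.isLocalMin hU).comp_continuous hγt)

/-- The image of a geodesic contains at most two degree-1 points of `X`,
namely `γ 0` and `γ L`. -/
theorem geodesic_degree_one_points_are_endpoints
    {X : Type*} [MetricSpace X] (γ : ℝ → X) (L : ℝ)
    (hγ : IsGeodesic γ L) :
    ∀ x ∈ γ '' Icc 0 L, IsDegreeOnePoint x → x = γ 0 ∨ x = γ L := by
  rintro _ ⟨t, ht, rfl⟩ hx
  by_contra! hne
  have ht' : t ∈ Ioo 0 L :=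
    ⟨ht.1.lt_of_ne fun h ↦ hne.1 (h ▸ rfl), ht.2.lt_of_ne fun h ↦ hne.2 (h ▸ rfl)⟩
  have hiso := hγ.isometry_domRestrict
  refine hx.ne_of_continuousOn_injOn (s := Ioo 0 L) ?_ ?_ (Ioo_mem_nhds ht'.1 ht'.2) rfl
  · exact (continuousOn_iff_continuous_domRestrict.mpr hiso.continuous).mono Ioo_subset_Icc_self
  · exact (injOn_iff_injective.mpr hiso.injective).mono Ioo_subset_Icc_self
end

section
/- Let X₁ and X₂ be two geodesics in a metric space X (isometric embeddings of compact intervals) whose images intersect in at least two points. Fix an orientation of X₁ and define an orientation of X₂ by requiring the first intersection point (along X₁) to precede the last intersection point (along X₂). Then for all x, y in the intersection of the images, x precedes y along X₁ if and only if x precedes y along X₂. -/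
open Set

/-- `x` precedes `y` along the path `γ` (parameterized on `[0, L]`). -/
def PrecAlong {X : Type*} (γ : ℝ → X) (L : ℝ) (x y : X) : Prop :=
  ∃ s ∈ Icc (0 : ℝ) L, ∃ t ∈ Icc (0 : ℝ) L, s < t ∧ γ s = x ∧ γ t = y

/-- Two geodesics meeting in at least two points are compatibly oriented once the
orientation of the second is chosen so that the first intersection point along the
first geodesic precedes the last one along the second. -/
theorem geodesics_compatibly_oriented
    {X : Type*} [MetricSpace X] (γ₁ γ₂ : ℝ → X) (L₁ L₂ : ℝ)
    (h1 : IsGeodesic γ₁ L₁) (h2 : IsGeodesic γ₂ L₂)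
    (S : Set X) (hS : S = (γ₁ '' Icc 0 L₁) ∩ (γ₂ '' Icc 0 L₂))
    (a b : X) (ha : a ∈ S) (hb : b ∈ S) (hab : a ≠ b)
    (hfirst : ∀ z ∈ S, z = a ∨ PrecAlong γ₁ L₁ a z)
    (hlast : ∀ z ∈ S, z = b ∨ PrecAlong γ₁ L₁ z b)
    (horient : PrecAlong γ₂ L₂ a b) :
    ∀ x ∈ S, ∀ y ∈ S, (PrecAlong γ₁ L₁ x y ↔ PrecAlong γ₂ L₂ x y) := by
  obtain ⟨hL₁, hd₁⟩ := h1
  obtain ⟨hL₂, hd₂⟩ := h2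
  subst hS
  have inj₁ : ∀ s ∈ Icc (0:ℝ) L₁, ∀ t ∈ Icc (0:ℝ) L₁, γ₁ s = γ₁ t → s = t := by
    intro s hs t ht h
    have h' := hd₁ s hs t ht
    rw [h, dist_self] at h'
    have := abs_eq_zero.mp h'.symm
    linarith
  have inj₂ : ∀ s ∈ Icc (0:ℝ) L₂, ∀ t ∈ Icc (0:ℝ) L₂, γ₂ s = γ₂ t → s = t := by
    intro s hs t ht h
    have h' := hd₂ s hs t ht
    rw [h, dist_self] at h'
    have := abs_eq_zero.mp h'.symm
    linarith
  obtain ⟨⟨sa, hsa, hga⟩, ⟨ta, hta, hgta⟩⟩ := ha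
  obtain ⟨⟨sb, hsb, hgb⟩, ⟨tb, htb, hgtb⟩⟩ := hb
  -- `ta < tb` from the orientation choice
  have htab : ta < tb := by
    obtain ⟨u, hu, v, hv, huv, hgu, hgv⟩ := horient
    have hu' : u = ta := inj₂ u hu ta hta (by rw [hgu, hgta])
    have hv' : v = tb := inj₂ v hv tb htb (by rw [hgv, hgtb])
    linarith
  -- `sa < sb` since `a` precedes `b` along `γ₁`
  have hsab : sa < sb := by
    rcases hlast a ⟨⟨sa, hsa, hga⟩, ⟨ta, hta, hgta⟩⟩ with h | ⟨u, hu, v, hv, huv, hgu, hgv⟩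
    · exact absurd h hab
    · have hu' : u = sa := inj₁ u hu sa hsa (by rw [hgu, hga])
      have hv' : v = sb := inj₁ v hv sb hsb (by rw [hgv, hgb])
      linarith
  -- `tb - ta = sb - sa`
  have dab : tb - ta = sb - sa := by
    have e1 := hd₁ sa hsa sb hsb
    have e2 := hd₂ ta hta tb htb
    rw [hga, hgb] at e1
    rw [hgta, hgtb] at e2
    rw [e2] at e1
    rw [abs_sub_comm ta tb, abs_sub_comm sa sb,
      abs_of_nonneg (by linarith : (0:ℝ) ≤ tb - ta),
      abs_of_nonneg (by linarith : (0:ℝ) ≤ sb - sa)] at e1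
    exact e1
  -- key: parameters of points of the intersection differ by a fixed translation
  have key : ∀ z ∈ (γ₁ '' Icc 0 L₁) ∩ (γ₂ '' Icc 0 L₂),
      ∃ s ∈ Icc (0:ℝ) L₁, ∃ t ∈ Icc (0:ℝ) L₂, γ₁ s = z ∧ γ₂ t = z ∧ t - ta = s - sa := by
    intro z hz
    obtain ⟨⟨s, hs, hgs⟩, ⟨t, ht, hgt⟩⟩ := hz
    refine ⟨s, hs, t, ht, hgs, hgt, ?_⟩
    have hsal : sa ≤ s := by
      rcases hfirst z ⟨⟨s, hs, hgs⟩, ⟨t, ht, hgt⟩⟩ with h | ⟨u, hu, v, hv, huv, hgu, hgv⟩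
      · have : s = sa := inj₁ s hs sa hsa (by rw [hgs, h, hga])
        linarith
      · have hu' : u = sa := inj₁ u hu sa hsa (by rw [hgu, hga])
        have hv' : v = s := inj₁ v hv s hs (by rw [hgv, hgs])
        linarith
    have hsbl : s ≤ sb := by
      rcases hlast z ⟨⟨s, hs, hgs⟩, ⟨t, ht, hgt⟩⟩ with h | ⟨u, hu, v, hv, huv, hgu, hgv⟩
      · have : s = sb := inj₁ s hs sb hsb (by rw [hgs, h, hgb])
        linarith
      · have hu' : u = s := inj₁ u hu s hs (by rw [hgu, hgs])
        have hv' : v = sb := inj₁ v hv sb hsb (by rw [hgv, hgb])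
        linarith
    have d1 : |t - ta| = |s - sa| := by
      have e1 := hd₁ s hs sa hsa
      have e2 := hd₂ t ht ta hta
      rw [hgs, hga] at e1
      rw [hgt, hgta] at e2
      rw [e2] at e1
      exact e1
    have d2 : |tb - t| = |sb - s| := by
      have e1 := hd₁ s hs sb hsb
      have e2 := hd₂ t ht tb htb
      rw [hgs, hgb] at e1
      rw [hgt, hgtb] at e2
      rw [e2] at e1
      rw [abs_sub_comm t tb, abs_sub_comm s sb] at e1
      exact e1
    rw [abs_of_nonneg (by linarith : (0:ℝ) ≤ s - sa)] at d1
    rw [abs_of_nonneg (by linarith : (0:ℝ) ≤ sb - s)] at d2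
    rcases abs_eq (by linarith : (0:ℝ) ≤ s - sa) |>.mp d1 with h1 | h1 <;>
      rcases abs_eq (by linarith : (0:ℝ) ≤ sb - s) |>.mp d2 with h2 | h2 <;>
      linarith
  intro x hx y hy
  obtain ⟨sx, hsx, tx, htx, hgx1, hgx2, hkx⟩ := key x hx
  obtain ⟨sy, hsy, ty, hty, hgy1, hgy2, hky⟩ := key y hy
  constructor
  · rintro ⟨u, hu, v, hv, huv, hgu, hgv⟩
    have hu' : u = sx := inj₁ u hu sx hsx (by rw [hgu, hgx1])
    have hv' : v = sy := inj₁ v hv sy hsy (by rw [hgv, hgy1])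
    exact ⟨tx, htx, ty, hty, by linarith, hgx2, hgy2⟩
  · rintro ⟨u, hu, v, hv, huv, hgu, hgv⟩
    have hu' : u = tx := inj₂ u hu tx htx (by rw [hgu, hgx2])
    have hv' : v = ty := inj₂ v hv ty hty (by rw [hgv, hgy2])
    exact ⟨sx, hsx, sy, hsy, by linarith, hgx1, hgy1⟩
end

section
/- Let X₁ and X₂ be two compatibly oriented geodesics in a metric space, parameterized by arc length so that they agree on their overlap (X₁(t) = X₂(t) whenever both are defined at t and the point lies in the intersection). Then the union X₁ ∪ X₂ admits a topological embedding into the Euclidean plane ℝ². -/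
open Set Metric

/-- Two compatibly oriented geodesics, arc-length parameterized so as to agree on
their overlap, have union embeddable in the plane. -/
theorem union_two_geodesics_embeds_in_plane
    {X : Type*} [MetricSpace X] (γ₁ γ₂ : ℝ → X) (a₁ b₁ a₂ b₂ : ℝ)
    (h1 : ∀ s ∈ Icc a₁ b₁, ∀ t ∈ Icc a₁ b₁, dist (γ₁ s) (γ₁ t) = |s - t|)
    (h2 : ∀ s ∈ Icc a₂ b₂, ∀ t ∈ Icc a₂ b₂, dist (γ₂ s) (γ₂ t) = |s - t|)
    (hagree : ∀ x ∈ (γ₁ '' Icc a₁ b₁) ∩ (γ₂ '' Icc a₂ b₂),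
      ∃ t ∈ Icc a₁ b₁ ∩ Icc a₂ b₂, γ₁ t = x ∧ γ₂ t = x) :
    ∃ f : ((γ₁ '' Icc a₁ b₁) ∪ (γ₂ '' Icc a₂ b₂) : Set X) → ℝ × ℝ,
      Topology.IsEmbedding f := by
  classical
  set S₁ : Set X := γ₁ '' Icc a₁ b₁ with hS₁def
  set S₂ : Set X := γ₂ '' Icc a₂ b₂ with hS₂def
  -- continuity of the parameterizations on their intervals
  have hc1 : ContinuousOn γ₁ (Icc a₁ b₁) :=
    (LipschitzOnWith.of_dist_le_mul (K := 1) (fun s hs t ht => by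
      rw [h1 s hs t ht, Real.dist_eq]; norm_num)).continuousOn
  have hc2 : ContinuousOn γ₂ (Icc a₂ b₂) :=
    (LipschitzOnWith.of_dist_le_mul (K := 1) (fun s hs t ht => by
      rw [h2 s hs t ht, Real.dist_eq]; norm_num)).continuousOn
  have hK1 : IsCompact S₁ := isCompact_Icc.image_of_continuousOn hc1
  have hK2 : IsCompact S₂ := isCompact_Icc.image_of_continuousOn hc2
  have hKU : IsCompact (S₁ ∪ S₂) := hK1.union hK2
  -- the globally continuous candidate parameter functions
  set g₁ : X → ℝ := fun x => a₁ + dist x (γ₁ a₁) with hg₁def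
  set g₂ : X → ℝ := fun x => a₂ + dist x (γ₂ a₂) with hg₂def
  have hg₁c : Continuous g₁ := by fun_prop
  have hg₂c : Continuous g₂ := by fun_prop
  -- g₁ recovers the parameter on S₁
  have hv1 : ∀ s ∈ Icc a₁ b₁, g₁ (γ₁ s) = s := by
    intro s hs
    have ha : a₁ ∈ Icc a₁ b₁ := ⟨le_refl _, hs.1.trans hs.2⟩
    show a₁ + dist (γ₁ s) (γ₁ a₁) = s
    rw [h1 s hs a₁ ha, abs_of_nonneg (by linarith [hs.1])]
    ring
  have hv2 : ∀ s ∈ Icc a₂ b₂, g₂ (γ₂ s) = s := by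
    intro s hs
    have ha : a₂ ∈ Icc a₂ b₂ := ⟨le_refl _, hs.1.trans hs.2⟩
    show a₂ + dist (γ₂ s) (γ₂ a₂) = s
    rw [h2 s hs a₂ ha, abs_of_nonneg (by linarith [hs.1])]
    ring
  -- agreement on the overlap
  have hag : ∀ x ∈ S₁ ∩ S₂, g₁ x = g₂ x := by
    intro x hx
    obtain ⟨t, ⟨ht1, ht2⟩, hxt1, hxt2⟩ := hagree x hx
    have e1 : g₁ x = t := by rw [← hxt1]; exact hv1 t ht1
    have e2 : g₂ x = t := by rw [← hxt2]; exact hv2 t ht2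
    rw [e1, e2]
  -- the piecewise parameter function
  set τ : X → ℝ := fun x => if x ∈ S₁ then g₁ x else g₂ x with hτdef
  have hτ2 : ∀ x ∈ S₂, τ x = g₂ x := by
    intro x hx
    by_cases hx1 : x ∈ S₁
    · simp only [hτdef, if_pos hx1]; exact hag x ⟨hx1, hx⟩
    · simp only [hτdef, if_neg hx1]
  have hτ1 : ∀ x ∈ S₁, τ x = g₁ x := fun x hx => by simp only [hτdef, if_pos hx]
  -- the candidate map
  set F : X → ℝ × ℝ := fun x => (τ x, infDist x S₁) with hFdef
  -- continuity on the union
  have hFc : ContinuousOn F (S₁ ∪ S₂) := by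
    apply ContinuousOn.prodMk
    · intro x hx
      apply ContinuousWithinAt.union
      · by_cases hx1 : x ∈ S₁
        · exact (hg₁c.continuousWithinAt).congr (fun y hy => hτ1 y hy) (hτ1 x hx1)
        · exact continuousWithinAt_of_notMem_closure (by rwa [hK1.isClosed.closure_eq])
      · by_cases hx2 : x ∈ S₂
        · exact (hg₂c.continuousWithinAt).congr (fun y hy => hτ2 y hy) (hτ2 x hx2)
        · exact continuousWithinAt_of_notMem_closure (by rwa [hK2.isClosed.closure_eq])
    · exact (continuous_infDist_pt S₁).continuousOn
  -- injectivity on the union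
  have hFi : ∀ x ∈ S₁ ∪ S₂, ∀ y ∈ S₁ ∪ S₂, F x = F y → x = y := by
    intro x hx y hy hxy
    have hfst : τ x = τ y := congrArg Prod.fst hxy
    have hsnd : infDist x S₁ = infDist y S₁ := congrArg Prod.snd hxy
    by_cases hx1 : x ∈ S₁ <;> by_cases hy1 : y ∈ S₁
    · obtain ⟨s, hs, rfl⟩ := hx1
      obtain ⟨t, ht, rfl⟩ := hy1
      rw [hτ1 _ (mem_image_of_mem _ hs), hτ1 _ (mem_image_of_mem _ ht),
        hv1 s hs, hv1 t ht] at hfst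
      rw [hfst]
    · exfalso
      have h0 : infDist x S₁ = 0 := infDist_zero_of_mem hx1
      have hpos : 0 < infDist y S₁ :=
        (hK1.isClosed.notMem_iff_infDist_pos ⟨x, hx1⟩).mp hy1
      rw [h0] at hsnd; linarith
    · exfalso
      have h0 : infDist y S₁ = 0 := infDist_zero_of_mem hy1
      have hpos : 0 < infDist x S₁ :=
        (hK1.isClosed.notMem_iff_infDist_pos ⟨y, hy1⟩).mp hx1
      rw [h0] at hsnd; linarith
    · have hx2 : x ∈ S₂ := hx.resolve_left hx1
      have hy2 : y ∈ S₂ := hy.resolve_left hy1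
      obtain ⟨s, hs, rfl⟩ := hx2
      obtain ⟨t, ht, rfl⟩ := hy2
      rw [hτ2 _ (mem_image_of_mem _ hs), hτ2 _ (mem_image_of_mem _ ht),
        hv2 s hs, hv2 t ht] at hfst
      rw [hfst]
  -- build the embedding
  refine ⟨fun p => F p.1, ?_⟩
  haveI : CompactSpace ((S₁ ∪ S₂ : Set X)) := isCompact_iff_compactSpace.mp hKU
  have hcont : Continuous fun p : (S₁ ∪ S₂ : Set X) => F p.1 := hFc.restrict
  have hinj : Function.Injective fun p : (S₁ ∪ S₂ : Set X) => F p.1 := by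
    intro p q hpq
    exact Subtype.ext (hFi p.1 p.2 q.1 q.2 hpq)
  exact (hcont.isClosedEmbedding hinj).isEmbedding
end

section
/- Let X be a connected finite metric graph in which the union of a finite family Γ of geodesics equals X. Then Γ can be modified to a retracted geodesic cover of the same or smaller size: a cover in which no geodesic has a neighborhood of one of its endpoints contained in the union of the other geodesics. -/
open Set

/-- The metric of `X` is a length metric: distances are realized, up to `ε`, by the
lengths of `1`-Lipschitz (unit-speed) paths. -/
def IsLengthMetric (X : Type*) [MetricSpace X] : Prop :=
  ∀ x y : X, ∀ ε : ℝ, 0 < ε → ∃ (T : ℝ) (p : ℝ → X), 0 ≤ T ∧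
    LipschitzOnWith 1 p (Icc 0 T) ∧ p 0 = x ∧ p T = y ∧ T ≤ dist x y + ε

section Aux

variable {X : Type*} [MetricSpace X] {k : ℕ}

/-- A "configuration": a choice of subinterval `[(c i).1, (c i).2] ⊆ [0, L i]` for each
geodesic, such that the subgeodesics indexed by `S` cover `X`. -/
def GoodConf (γ : Fin k → ℝ → X) (L : Fin k → ℝ) (S : Finset (Fin k))
    (c : Fin k → ℝ × ℝ) : Prop :=
  (∀ i, 0 ≤ (c i).1 ∧ (c i).1 ≤ (c i).2 ∧ (c i).2 ≤ L i) ∧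
  ∀ x : X, ∃ i ∈ S, ∃ t ∈ Icc (c i).1 (c i).2, γ i t = x

lemma kset_isCompact (L : Fin k → ℝ) :
    IsCompact {c : Fin k → ℝ × ℝ | ∀ i, 0 ≤ (c i).1 ∧ (c i).1 ≤ (c i).2 ∧ (c i).2 ≤ L i} := by
  have h1 : {c : Fin k → ℝ × ℝ | ∀ i, 0 ≤ (c i).1 ∧ (c i).1 ≤ (c i).2 ∧ (c i).2 ≤ L i}
      = Set.pi univ fun i => {p : ℝ × ℝ | 0 ≤ p.1 ∧ p.1 ≤ p.2 ∧ p.2 ≤ L i} := by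
    ext c; simp [Set.mem_pi]
  rw [h1]
  refine isCompact_univ_pi fun i => ?_
  have h2 : {p : ℝ × ℝ | 0 ≤ p.1 ∧ p.1 ≤ p.2 ∧ p.2 ≤ L i}
      = (Icc (0:ℝ) (L i) ×ˢ Icc (0:ℝ) (L i)) ∩ {p : ℝ × ℝ | p.1 ≤ p.2} := by
    ext ⟨u, v⟩
    constructor
    · rintro ⟨h1, h2, h3⟩
      exact ⟨⟨⟨h1, h2.trans h3⟩, ⟨h1.trans h2, h3⟩⟩, h2⟩
    · rintro ⟨⟨⟨hu0, _⟩, ⟨_, hvL⟩⟩, huv⟩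
      exact ⟨hu0, huv, hvL⟩
  rw [h2]
  exact (isCompact_Icc.prod isCompact_Icc).inter_right
    (isClosed_le continuous_fst continuous_snd)

lemma goodConf_isCompact [Nonempty X] (γ : Fin k → ℝ → X) (L : Fin k → ℝ)
    (hγ : ∀ i, ContinuousOn (γ i) (Icc 0 (L i))) (S : Finset (Fin k)) :
    IsCompact {c | GoodConf γ L S c} := by
  set Kset := {c : Fin k → ℝ × ℝ | ∀ i, 0 ≤ (c i).1 ∧ (c i).1 ≤ (c i).2 ∧ (c i).2 ≤ L i}
    with hKdef
  have hK : IsCompact Kset := kset_isCompact L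
  have hG : ∀ x : X,
      IsCompact {c | c ∈ Kset ∧ ∃ i ∈ S, ∃ t ∈ Icc (c i).1 (c i).2, γ i t = x} := by
    intro x
    have key : ∀ i : Fin k,
        IsCompact {c | c ∈ Kset ∧ ∃ t ∈ Icc (c i).1 (c i).2, γ i t = x} := by
      intro i
      set Z := Icc (0:ℝ) (L i) ∩ (γ i) ⁻¹' {x} with hZdef
      have hZc : IsClosed Z :=
        (hγ i).preimage_isClosed_of_isClosed isClosed_Icc isClosed_singleton
      have hZcomp : IsCompact Z :=
        isCompact_Icc.of_isClosed_subset hZc inter_subset_left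
      set F := (Kset ×ˢ Z) ∩
        {q : (Fin k → ℝ × ℝ) × ℝ | (q.1 i).1 ≤ q.2 ∧ q.2 ≤ (q.1 i).2} with hFdef
      have hclosed : IsClosed {q : (Fin k → ℝ × ℝ) × ℝ | (q.1 i).1 ≤ q.2 ∧ q.2 ≤ (q.1 i).2} := by
        have c1 : Continuous fun q : (Fin k → ℝ × ℝ) × ℝ => (q.1 i).1 := by fun_prop
        have c2 : Continuous fun q : (Fin k → ℝ × ℝ) × ℝ => (q.1 i).2 := by fun_prop
        exact (isClosed_le c1 continuous_snd).inter (isClosed_le continuous_snd c2)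
      have hFcomp : IsCompact F := (hK.prod hZcomp).inter_right hclosed
      have himg : {c | c ∈ Kset ∧ ∃ t ∈ Icc (c i).1 (c i).2, γ i t = x} = Prod.fst '' F := by
        ext c
        constructor
        · rintro ⟨hc, t, ht, hγt⟩
          refine ⟨(c, t), ⟨⟨hc, ⟨⟨(hc i).1.trans ht.1, ht.2.trans (hc i).2.2⟩, hγt⟩⟩,
            ht.1, ht.2⟩, rfl⟩
        · rintro ⟨⟨c', t⟩, ⟨⟨hc, _, hγt⟩, h1, h2⟩, rfl⟩
          exact ⟨hc, t, ⟨h1, h2⟩, hγt⟩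
      rw [himg]
      exact hFcomp.image continuous_fst
    have heq : {c | c ∈ Kset ∧ ∃ i ∈ S, ∃ t ∈ Icc (c i).1 (c i).2, γ i t = x}
        = ⋃ i ∈ S, {c | c ∈ Kset ∧ ∃ t ∈ Icc (c i).1 (c i).2, γ i t = x} := by
      ext c
      simp only [mem_setOf_eq, mem_iUnion]
      constructor
      · rintro ⟨hc, i, hi, ht⟩; exact ⟨i, hi, hc, ht⟩
      · rintro ⟨i, hi, hc, ht⟩; exact ⟨hc, i, hi, ht⟩
    rw [heq]
    exact S.finite_toSet.isCompact_biUnion fun i _ => key i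
  obtain ⟨x₀⟩ := ‹Nonempty X›
  have hCeq : {c | GoodConf γ L S c}
      = ⋂ x : X, {c | c ∈ Kset ∧ ∃ i ∈ S, ∃ t ∈ Icc (c i).1 (c i).2, γ i t = x} := by
    ext c
    simp only [GoodConf, mem_setOf_eq, mem_iInter]
    constructor
    · rintro ⟨h1, h2⟩ x; exact ⟨h1, h2 x⟩
    · intro h; exact ⟨(h x₀).1, fun x => (h x).2⟩
  rw [hCeq]
  exact (hG x₀).of_isClosed_subset (isClosed_iInter fun x => (hG x).isClosed)
    (iInter_subset _ x₀)

end Aux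

/-- Any geodesic cover of a connected finite metric graph can be modified, replacing
geodesics by subgeodesics, into a retracted geodesic cover of the same or smaller
size: no geodesic of the new cover has a neighborhood of one of its endpoints
contained in the union of the other geodesics. -/
theorem retracted_cover_exists
    {X : Type*} [MetricSpace X] [ConnectedSpace X]
    (hlen : IsLengthMetric X)
    (m : ℕ) (ℓ : Fin m → ℝ) (hℓ : ∀ i, 0 < ℓ i) (e : Fin m → ℝ → X)
    (he : ∀ i, ContinuousOn (e i) (Icc 0 (ℓ i)) ∧ InjOn (e i) (Icc 0 (ℓ i)))
    (hecov : (⋃ i, e i '' Icc 0 (ℓ i)) = univ)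
    (k : ℕ) (γ : Fin k → ℝ → X) (L : Fin k → ℝ)
    (hg : ∀ i, IsGeodesic (γ i) (L i))
    (hcov : (⋃ i, γ i '' Icc 0 (L i)) = univ) :
    ∃ (k' : ℕ) (_ : k' ≤ k) (γ' : Fin k' → ℝ → X) (L' : Fin k' → ℝ),
      (∀ i, IsGeodesic (γ' i) (L' i)) ∧
      (⋃ i, γ' i '' Icc 0 (L' i)) = univ ∧
      (∀ i, ∃ j, γ' i '' Icc 0 (L' i) ⊆ γ j '' Icc 0 (L j)) ∧
      (∀ i : Fin k', ∀ p ∈ ({γ' i 0, γ' i (L' i)} : Set X),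
        ¬ ∃ U ∈ nhds p, U ⊆ ⋃ (j) (_ : j ≠ i), γ' j '' Icc 0 (L' j)) := by
  classical
  have hγcont : ∀ i, ContinuousOn (γ i) (Icc 0 (L i)) := by
    intro i
    have hl : LipschitzOnWith 1 (γ i) (Icc 0 (L i)) := by
      rw [lipschitzOnWith_iff_dist_le_mul]
      intro s hs t ht
      rw [(hg i).2 s hs t ht, Real.dist_eq]
      simp
    exact hl.continuousOn
  set P : Finset (Fin k) → Prop := fun S => ∃ c, GoodConf γ L S c with hPdef
  have hPuniv : P Finset.univ := by
    refine ⟨fun i => (0, L i), fun i => ⟨le_refl _, (hg i).1, le_refl _⟩, fun x => ?_⟩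
    have hx : x ∈ ⋃ i, γ i '' Icc 0 (L i) := by rw [hcov]; trivial
    simp only [mem_iUnion, mem_image] at hx
    obtain ⟨i, t, ht, hxt⟩ := hx
    exact ⟨i, Finset.mem_univ i, t, ht, hxt⟩
  obtain ⟨S, hSmem, hSmin⟩ := Finset.exists_min_image (Finset.univ.filter P) Finset.card
    ⟨Finset.univ, by simp [hPuniv]⟩
  have hSP : P S := (Finset.mem_filter.mp hSmem).2
  have hSmin' : ∀ S', P S' → S.card ≤ S'.card := fun S' h =>
    hSmin S' (Finset.mem_filter.mpr ⟨Finset.mem_univ _, h⟩)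
  -- minimize total length over the compact set of good configurations for S
  have hCcomp := goodConf_isCompact γ L hγcont S
  have hCne : {c | GoodConf γ L S c}.Nonempty := hSP
  have hfc : ContinuousOn (fun c : Fin k → ℝ × ℝ => ∑ i ∈ S, ((c i).2 - (c i).1))
      {c | GoodConf γ L S c} := by
    refine Continuous.continuousOn ?_
    exact continuous_finset_sum _ fun i _ => by fun_prop
  obtain ⟨c, hcC, hcmin⟩ := hCcomp.exists_isMinOn hCne hfc
  obtain ⟨hcK, hccov⟩ := hcC
  -- indexing
  set idx : Fin S.card → Fin k := fun n => ((S.equivFin.symm n : S) : Fin k) with hidxdef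
  have hidxmem : ∀ n, idx n ∈ S := fun n => (S.equivFin.symm n).2
  have hidxinj : Function.Injective idx := fun a b hab => by
    have := Subtype.ext hab
    simpa using S.equivFin.symm.injective this
  have hidxsurj : ∀ j ∈ S, ∃ n, idx n = j := fun j hj =>
    ⟨S.equivFin ⟨j, hj⟩, by simp [hidxdef]⟩
  refine ⟨S.card, by simpa using Finset.card_le_univ S,
    fun n t => γ (idx n) ((c (idx n)).1 + t),
    fun n => (c (idx n)).2 - (c (idx n)).1, ?_, ?_, ?_, ?_⟩
  case _ =>
    -- geodesics
    intro n
    refine ⟨sub_nonneg.mpr (hcK (idx n)).2.1, fun s hs t ht => ?_⟩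
    obtain ⟨h0, h1, h2⟩ := hcK (idx n)
    have hmem : ∀ u : ℝ, 0 ≤ u → u ≤ (c (idx n)).2 - (c (idx n)).1 →
        (c (idx n)).1 + u ∈ Icc (0:ℝ) (L (idx n)) := by
      intro u hu1 hu2
      exact ⟨by linarith, by linarith⟩
    simp only [mem_Icc] at hs ht
    rw [(hg (idx n)).2 _ (hmem s hs.1 hs.2) _ (hmem t ht.1 ht.2)]
    congr 1
    ring
  case _ =>
    -- cover
    apply eq_univ_of_forall
    intro x
    obtain ⟨j, hj, t, ht, hxt⟩ := hccov x
    obtain ⟨n, rfl⟩ := hidxsurj j hj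
    simp only [mem_iUnion, mem_image]
    refine ⟨n, t - (c (idx n)).1, ⟨by linarith [ht.1], by linarith [ht.2]⟩, ?_⟩
    rw [show (c (idx n)).1 + (t - (c (idx n)).1) = t by ring]
    exact hxt
  case _ =>
    -- subgeodesics
    intro n
    refine ⟨idx n, ?_⟩
    rintro x ⟨t, ht, rfl⟩
    simp only [mem_Icc] at ht
    refine ⟨(c (idx n)).1 + t, ?_, rfl⟩
    obtain ⟨h0, h1, h2⟩ := hcK (idx n)
    exact ⟨by linarith [ht.1], by linarith [ht.2]⟩
  case _ =>
    -- retracted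
    intro n p hp
    rintro ⟨U, hU, hUsub⟩
    obtain ⟨ε, hε, hball⟩ := Metric.mem_nhds_iff.mp hU
    set i := idx n with hidef
    set a := (c i).1 with hadef
    set b := (c i).2 with hbdef
    have hothers : Metric.ball p ε ⊆
        ⋃ j, ⋃ (_ : j ∈ S ∧ j ≠ i), γ j '' Icc (c j).1 (c j).2 := by
      refine hball.trans (hUsub.trans ?_)
      intro x hx
      simp only [mem_iUnion, mem_image] at hx ⊢
      obtain ⟨mm, hmn, t, ht, hxt⟩ := hx
      simp only [mem_Icc] at ht
      refine ⟨idx mm, ⟨hidxmem mm, fun h => hmn (hidxinj h)⟩,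
        (c (idx mm)).1 + t, ?_, hxt⟩
      obtain ⟨h0, h1, h2⟩ := hcK (idx mm)
      exact ⟨by linarith [ht.1], by linarith [ht.2]⟩
    have hothers' : ∀ x ∈ Metric.ball p ε,
        ∃ j, (j ∈ S ∧ j ≠ i) ∧ ∃ t ∈ Icc (c j).1 (c j).2, γ j t = x := by
      intro x hx
      have := hothers hx
      simp only [mem_iUnion, mem_image] at this
      obtain ⟨j, hj, t, ht, hxt⟩ := this
      exact ⟨j, hj, t, ht, hxt⟩
    have hab : a ≤ b := (hcK i).2.1
    simp only [mem_insert_iff, mem_singleton_iff] at hp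
    rcases eq_or_lt_of_le hab with heq | hlt
    · -- point geodesic: remove it, contradicting minimal cardinality
      have hpa : p = γ i a := by
        rcases hp with hp | hp
        · rw [hp]; show γ i (a + 0) = γ i a; norm_num
        · rw [hp]; show γ i (a + (b - a)) = γ i a; rw [← heq]; norm_num
      have hP' : P (S.erase i) := by
        refine ⟨c, hcK, fun x => ?_⟩
        obtain ⟨j, hj, t, ht, hxt⟩ := hccov x
        by_cases hji : j = i
        · subst hji
          have hta : t = a := le_antisymm (heq ▸ ht.2) ht.1
          have hxp : x = p := by rw [hpa, ← hxt, hta]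
          obtain ⟨j', ⟨hj'S, hj'i⟩, t', ht', hxt'⟩ :=
            hothers' x (by rw [hxp]; exact Metric.mem_ball_self hε)
          exact ⟨j', Finset.mem_erase.mpr ⟨hj'i, hj'S⟩, t', ht', hxt'⟩
        · exact ⟨j, Finset.mem_erase.mpr ⟨hji, hj⟩, t, ht, hxt⟩
      exact absurd (hSmin' _ hP') (Finset.card_erase_lt_of_mem (hidxmem n)).not_ge
    · -- positive length: shrink it, contradicting minimal length
      set δ := min (ε/2) (b - a) with hδdef
      have hδpos : 0 < δ := lt_min (by linarith) (by linarith)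
      have hδle : δ ≤ b - a := min_le_right _ _
      have hδε : δ < ε := lt_of_le_of_lt (min_le_left _ _) (by linarith)
      obtain ⟨h0, h1, h2⟩ := hcK i
      have hmemab : ∀ u ∈ Icc a b, u ∈ Icc (0:ℝ) (L i) := fun u hu =>
        ⟨h0.trans hu.1, hu.2.trans h2⟩
      rcases hp with hp | hp
      · -- p = γ i a : shrink left endpoint
        have hpa : p = γ i a := by rw [hp]; show γ i (a + 0) = γ i a; norm_num
        set c' := Function.update c i (a + δ, b) with hc'def
        have hc'K : ∀ j, 0 ≤ (c' j).1 ∧ (c' j).1 ≤ (c' j).2 ∧ (c' j).2 ≤ L j := by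
          intro j
          by_cases hji : j = i
          · subst hji
            rw [hc'def, Function.update_self]
            exact ⟨by show (0:ℝ) ≤ a + δ; linarith, by show a + δ ≤ b; linarith,
              by show b ≤ L i; linarith⟩
          · rw [hc'def, Function.update_of_ne hji]; exact hcK j
        have hc'cov : ∀ x : X, ∃ j ∈ S, ∃ t ∈ Icc (c' j).1 (c' j).2, γ j t = x := by
          intro x
          obtain ⟨j, hj, t, ht, hxt⟩ := hccov x
          by_cases hji : j = i
          · subst hji
            by_cases hta : a + δ ≤ t
            · refine ⟨i, hj, t, ?_, hxt⟩
              rw [hc'def, Function.update_self]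
              exact ⟨hta, ht.2⟩
            · push_neg at hta
              have hxball : x ∈ Metric.ball p ε := by
                rw [Metric.mem_ball, ← hxt, hpa,
                  (hg i).2 t (hmemab t ht) a (hmemab a ⟨le_refl _, hab⟩)]
                rw [abs_of_nonneg (by linarith [ht.1])]
                linarith [ht.1]
              obtain ⟨j', ⟨hj'S, hj'i⟩, t', ht', hxt'⟩ := hothers' x hxball
              refine ⟨j', hj'S, t', ?_, hxt'⟩
              rw [hc'def, Function.update_of_ne hj'i]
              exact ht'
          · refine ⟨j, hj, t, ?_, hxt⟩
            rw [hc'def, Function.update_of_ne hji]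
            exact ht
        have hle := isMinOn_iff.mp hcmin c' ⟨hc'K, hc'cov⟩
        have hsum : ∑ j ∈ S, ((c' j).2 - (c' j).1)
            = ∑ j ∈ S, ((c j).2 - (c j).1) - δ := by
          rw [← Finset.add_sum_erase S _ (hidxmem n),
            ← Finset.add_sum_erase S (fun j => (c j).2 - (c j).1) (hidxmem n)]
          have hrest : ∑ j ∈ S.erase i, ((c' j).2 - (c' j).1)
              = ∑ j ∈ S.erase i, ((c j).2 - (c j).1) :=
            Finset.sum_congr rfl fun j hj => by
              rw [hc'def, Function.update_of_ne (Finset.ne_of_mem_erase hj)]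
          rw [hrest, hc'def, Function.update_self]
          ring
        rw [hsum] at hle
        linarith
      · -- p = γ i b : shrink right endpoint
        have hpb : p = γ i b := by
          rw [hp]; show γ i (a + (b - a)) = γ i b; congr 1; ring
        set c' := Function.update c i (a, b - δ) with hc'def
        have hc'K : ∀ j, 0 ≤ (c' j).1 ∧ (c' j).1 ≤ (c' j).2 ∧ (c' j).2 ≤ L j := by
          intro j
          by_cases hji : j = i
          · subst hji
            rw [hc'def, Function.update_self]
            exact ⟨by show (0:ℝ) ≤ a; linarith, by show a ≤ b - δ; linarith,
              by show b - δ ≤ L i; linarith⟩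
          · rw [hc'def, Function.update_of_ne hji]; exact hcK j
        have hc'cov : ∀ x : X, ∃ j ∈ S, ∃ t ∈ Icc (c' j).1 (c' j).2, γ j t = x := by
          intro x
          obtain ⟨j, hj, t, ht, hxt⟩ := hccov x
          by_cases hji : j = i
          · subst hji
            by_cases hta : t ≤ b - δ
            · refine ⟨i, hj, t, ?_, hxt⟩
              rw [hc'def, Function.update_self]
              exact ⟨ht.1, hta⟩
            · push_neg at hta
              have hxball : x ∈ Metric.ball p ε := by
                rw [Metric.mem_ball, ← hxt, hpb,
                  (hg i).2 t (hmemab t ht) b (hmemab b ⟨hab, le_refl _⟩)]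
                rw [abs_of_nonpos (by linarith [ht.2])]
                linarith [ht.2]
              obtain ⟨j', ⟨hj'S, hj'i⟩, t', ht', hxt'⟩ := hothers' x hxball
              refine ⟨j', hj'S, t', ?_, hxt'⟩
              rw [hc'def, Function.update_of_ne hj'i]
              exact ht'
          · refine ⟨j, hj, t, ?_, hxt⟩
            rw [hc'def, Function.update_of_ne hji]
            exact ht
        have hle := isMinOn_iff.mp hcmin c' ⟨hc'K, hc'cov⟩
        have hsum : ∑ j ∈ S, ((c' j).2 - (c' j).1)
            = ∑ j ∈ S, ((c j).2 - (c j).1) - δ := by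
          rw [← Finset.add_sum_erase S _ (hidxmem n),
            ← Finset.add_sum_erase S (fun j => (c j).2 - (c j).1) (hidxmem n)]
          have hrest : ∑ j ∈ S.erase i, ((c' j).2 - (c' j).1)
              = ∑ j ∈ S.erase i, ((c j).2 - (c j).1) :=
            Finset.sum_congr rfl fun j hj => by
              rw [hc'def, Function.update_of_ne (Finset.ne_of_mem_erase hj)]
          rw [hrest, hc'def, Function.update_self]
          ring
        rw [hsum] at hle
        linarith
end

section
/- Let X be a metric space which is the union of n geodesics, and suppose p₁, p₂, p₃, p₄ are four points of X such that each pair pᵢ, pⱼ lies on a common geodesic of the cover, and a monotone coordinate map φ : X → ℝ (isometric on each geodesic) satisfies φ(p₁) < φ(p₂) < φ(p₃) < φ(p₄). If X contains six arcs joining the pairs (pᵢ, pⱼ) pairwise disjoint except at endpoints (a topological K₄ on p₁,…,p₄), then for any a with φ(p₂) < a < φ(p₃), the preimage φ⁻¹(a) contains at least 4 points. In particular, if n = 3, this is a contradiction, so no such configuration exists. -/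
open Set

private def k4I : Fin 4 → Fin 4 := ![0, 0, 1, 1]
private def k4J : Fin 4 → Fin 4 := ![2, 3, 2, 3]

private lemma k4lt : ∀ k, k4I k < k4J k := by decide

private lemma k4ne : ∀ k l : Fin 4, k ≠ l → (k4I k, k4J k) ≠ (k4I l, k4J l) := by decide

/-- If a metric space `X` is the union of `n` geodesics, `φ : X → ℝ` is a coordinate
map isometric (orientation-preservingly) on each geodesic, four points `p 0,…,p 3`
pairwise lie on common geodesics with `φ (p 0) < φ (p 1) < φ (p 2) < φ (p 3)`, and `X`
contains a topological `K₄` on these points, then every level `a` strictly between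
`φ (p 1)` and `φ (p 2)` has at least `4` preimages; in particular this is impossible
when `n = 3`. -/
theorem no_K4_coordinate_configuration
    {X : Type*} [MetricSpace X] (n : ℕ)
    (γ : Fin n → ℝ → X) (L : Fin n → ℝ)
    (hg : ∀ i, IsGeodesic (γ i) (L i))
    (hcov : (⋃ i, γ i '' Icc 0 (L i)) = univ)
    (φ : X → ℝ)
    (hiso : ∀ i, ∀ s ∈ Icc (0 : ℝ) (L i), ∀ t ∈ Icc (0 : ℝ) (L i),
      φ (γ i t) - φ (γ i s) = t - s)
    (p : Fin 4 → X)
    (hcommon : ∀ i j : Fin 4, i ≠ j →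
      ∃ m, p i ∈ γ m '' Icc 0 (L m) ∧ p j ∈ γ m '' Icc 0 (L m))
    (hord : φ (p 0) < φ (p 1) ∧ φ (p 1) < φ (p 2) ∧ φ (p 2) < φ (p 3))
    (A : Fin 4 → Fin 4 → ℝ → X)
    (harc : ∀ i j : Fin 4, i < j → ContinuousOn (A i j) (Icc 0 1) ∧
      InjOn (A i j) (Icc 0 1) ∧ A i j 0 = p i ∧ A i j 1 = p j)
    (hdisj : ∀ i j k l : Fin 4, i < j → k < l → (i, j) ≠ (k, l) →
      (A i j '' Icc (0 : ℝ) 1) ∩ (A k l '' Icc (0 : ℝ) 1) ⊆ range p) :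
    (∀ a : ℝ, φ (p 1) < a → a < φ (p 2) →
      ∃ x₁ x₂ x₃ x₄ : X, x₁ ≠ x₂ ∧ x₁ ≠ x₃ ∧ x₁ ≠ x₄ ∧ x₂ ≠ x₃ ∧ x₂ ≠ x₄ ∧
        x₃ ≠ x₄ ∧ φ x₁ = a ∧ φ x₂ = a ∧ φ x₃ = a ∧ φ x₄ = a) ∧
    (n = 3 → False) := by
  obtain ⟨h01, h12, h23⟩ := hord
  -- φ is continuous
  have hγcont : ∀ i, ContinuousOn (γ i) (Icc 0 (L i)) := by
    intro i
    refine (LipschitzOnWith.of_dist_le_mul (K := 1) fun s hs t ht => ?_).continuousOn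
    rw [(hg i).2 s hs t ht, Real.dist_eq]
    simp
  have hSclosed : ∀ i, IsClosed (γ i '' Icc 0 (L i)) :=
    fun i => (isCompact_Icc.image_of_continuousOn (hγcont i)).isClosed
  have hφS : ∀ i, ContinuousOn φ (γ i '' Icc 0 (L i)) := by
    intro i
    refine (LipschitzOnWith.of_dist_le_mul (K := 1) fun x hx y hy => ?_).continuousOn
    obtain ⟨s, hs, rfl⟩ := hx
    obtain ⟨t, ht, rfl⟩ := hy
    rw [Real.dist_eq, hiso i t ht s hs, (hg i).2 s hs t ht]
    simp [abs_sub_comm]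
  have hφ : Continuous φ :=
    (locallyFinite_of_finite _).continuous hcov hSclosed hφS
  -- main construction of four distinct preimages
  have key : ∀ a : ℝ, φ (p 1) < a → a < φ (p 2) →
      ∃ x : Fin 4 → X, (∀ k, φ (x k) = a) ∧ ∀ k l, k ≠ l → x k ≠ x l := by
    intro a ha1 ha2
    have h4 : ∀ k : Fin 4, (k4I k = 0 ∨ k4I k = 1) ∧ (k4J k = 2 ∨ k4J k = 3) := by decide
    have hφp : ∀ k, φ (p (k4I k)) < a ∧ a < φ (p (k4J k)) := by
      intro k
      obtain ⟨hIk, hJk⟩ := h4 k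
      constructor
      · rcases hIk with h | h <;> rw [h] <;> linarith
      · rcases hJk with h | h <;> rw [h] <;> linarith
    have hx : ∀ k, ∃ t ∈ Icc (0:ℝ) 1, φ (A (k4I k) (k4J k) t) = a := by
      intro k
      obtain ⟨hc, _, h0, h1⟩ := harc (k4I k) (k4J k) (k4lt k)
      have hmem : a ∈ Icc (φ (A (k4I k) (k4J k) 0)) (φ (A (k4I k) (k4J k) 1)) := by
        rw [h0, h1]
        exact ⟨le_of_lt (hφp k).1, le_of_lt (hφp k).2⟩
      have := intermediate_value_Icc (by norm_num : (0:ℝ) ≤ 1)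
        (hφ.comp_continuousOn hc) hmem
      obtain ⟨t, ht, hφt⟩ := this
      exact ⟨t, ht, hφt⟩
    choose t ht hφt using hx
    refine ⟨fun k => A (k4I k) (k4J k) (t k), hφt, ?_⟩
    intro k l hkl heq
    have hmem : A (k4I k) (k4J k) (t k) ∈
        (A (k4I k) (k4J k) '' Icc (0:ℝ) 1) ∩ (A (k4I l) (k4J l) '' Icc (0:ℝ) 1) :=
      ⟨⟨t k, ht k, rfl⟩, ⟨t l, ht l, heq.symm⟩⟩
    obtain ⟨m, hm⟩ := hdisj (k4I k) (k4J k) (k4I l) (k4J l) (k4lt k) (k4lt l)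
      (k4ne k l hkl) hmem
    have hpm : φ (p m) = a := by rw [hm]; exact hφt k
    have h4 : m = 0 ∨ m = 1 ∨ m = 2 ∨ m = 3 := by omega
    rcases h4 with rfl | rfl | rfl | rfl <;> linarith
  constructor
  · intro a ha1 ha2
    obtain ⟨x, hxa, hxne⟩ := key a ha1 ha2
    exact ⟨x 0, x 1, x 2, x 3, hxne 0 1 (by decide), hxne 0 2 (by decide),
      hxne 0 3 (by decide), hxne 1 2 (by decide), hxne 1 3 (by decide),
      hxne 2 3 (by decide), hxa 0, hxa 1, hxa 2, hxa 3⟩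
  · rintro rfl
    set a := (φ (p 1) + φ (p 2)) / 2 with ha
    obtain ⟨x, hxa, hxne⟩ := key a (by rw [ha]; linarith) (by rw [ha]; linarith)
    have hmem : ∀ k, ∃ m, x k ∈ γ m '' Icc 0 (L m) := by
      intro k
      have : x k ∈ ⋃ i, γ i '' Icc 0 (L i) := by rw [hcov]; trivial
      exact mem_iUnion.mp this
    choose f hf using hmem
    obtain ⟨k, l, hkl, hfkl⟩ :=
      Fintype.exists_ne_map_eq_of_card_lt f (by simp)
    obtain ⟨s, hs, hxs⟩ := hf k
    obtain ⟨u, hu, hxu⟩ := hf l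
    rw [hfkl] at hxs hs
    have hsu : u - s = 0 := by
      have := hiso (f l) s hs u hu
      rw [hxs, hxu, hxa k, hxa l] at this
      linarith
    exact hxne k l hkl (by rw [← hxs, ← hxu, sub_eq_zero.mp hsu])
end
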